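/- arXiv:2205.05398 — 3 statements merged into one kernel-verified Lean document; each statement's English description precedes it below -/
import Mathlib

section
/- Let Z_1, ..., Z_{n+1} be real-valued random variables on a probability space whose joint distribution is exchangeable, i.e., for every permutation π of {1, ..., n+1} the random vector (Z_{π(1)}, ..., Z_{π(n+1)}) has the same law as (Z_1, ..., Z_{n+1}). For k ∈ {1, ..., n}, let Z_{(k)} denote the k-th smallest value among Z_1, ..., Z_n. Then P(Z_{n+1} ≤ Z_{(k)}) ≥ k/(n+1). -/
/-!
Let `R a := countBelow Z (Z a)`, the number of scores strictly below `Z a`. In every realisation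
the `k` indices carrying the `k` smallest scores (ties broken arbitrarily) have `R a < k`, so
`∑ a, P (R a < k) ≥ k`. By exchangeability all `n + 1` summands are equal, hence
`P (R (n + 1) < k) ≥ k / (n + 1)`; and `R (n + 1) < k` says precisely that `Z (n + 1) ≤ Z₍ₖ₎`.
-/

open MeasureTheory

/-- The `k`-th smallest value (0-indexed) among `v 0, ..., v (n-1)`. -/
noncomputable def orderStat {n : ℕ} (v : Fin n → ℝ) (k : Fin n) : ℝ :=
  v (Tuple.sort v k)

open Finset

def countBelow {ι α : Type*} [Fintype ι] [LinearOrder α] (v : ι → α) (t : α) : ℕ :=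
  #{i | v i < t}

section Combinatorics

variable {α : Type*} [LinearOrder α] {m : ℕ}

lemma countBelow_comp_perm {ι : Type*} [Fintype ι] (v : ι → α) (π : Equiv.Perm ι) (t : α) :
    countBelow (v ∘ π) t = countBelow v t := by
  simp only [countBelow, card_filter]
  exact Equiv.sum_comp π fun i => if v i < t then 1 else 0

lemma countBelow_castSucc_last (v : Fin (m + 1) → α) :
    countBelow (fun i : Fin m => v i.castSucc) (v (Fin.last m)) = countBelow v (v (Fin.last m)) := by
  rw [countBelow, countBelow, card_filter, card_filter, Fin.sum_univ_castSucc]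
  simp

lemma countBelow_sort_le (v : Fin m → α) (j : Fin m) :
    countBelow v (v (Tuple.sort v j)) ≤ j := by
  calc countBelow v (v (Tuple.sort v j))
      ≤ #{i : Fin m | (i : ℕ) < j} := by
        refine card_le_card_of_injOn (Tuple.sort v).symm (fun i hi => ?_)
          (Tuple.sort v).symm.injective.injOn
        simp only [coe_filter, mem_univ, true_and, Set.mem_ofPred_eq] at hi ⊢
        by_contra! h
        have := Tuple.monotone_sort v (Fin.le_def.mpr h)
        simp only [Function.comp_apply, Equiv.apply_symm_apply] at this
        exact this.not_gt hi
    _ ≤ j := by rw [Fin.card_filter_val_lt]; exact min_le_right _ _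

lemma lt_countBelow_of_sort_lt (v : Fin m → α) (j : Fin m) {t : α}
    (ht : v (Tuple.sort v j) < t) : j < countBelow v t := by
  calc (j : ℕ) < #{i : Fin m | (i : ℕ) < j + 1} := by rw [Fin.card_filter_val_lt]; omega
    _ ≤ countBelow v t := by
        refine card_le_card_of_injOn (Tuple.sort v) (fun i hi => ?_) (Tuple.sort v).injective.injOn
        simp only [coe_filter, mem_univ, true_and, Set.mem_ofPred_eq] at hi ⊢
        exact (Tuple.monotone_sort v (Fin.le_def.mpr (Nat.lt_succ_iff.mp hi))).trans_lt ht

lemma le_card_filter_countBelow_lt (v : Fin m → α) {k : ℕ} (hkm : k ≤ m) :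
    k ≤ #{a | countBelow v (v a) < k} := by
  calc k = #{j : Fin m | (j : ℕ) < k} := by rw [Fin.card_filter_val_lt]; omega
    _ ≤ #{a | countBelow v (v a) < k} := by
        refine card_le_card_of_injOn (Tuple.sort v) (fun j hj => ?_) (Tuple.sort v).injective.injOn
        simp only [coe_filter, mem_univ, true_and, Set.mem_ofPred_eq] at hj ⊢
        exact (countBelow_sort_le v j).trans_lt hj

end Combinatorics

lemma le_orderStat_iff {m : ℕ} (v : Fin m → ℝ) (j : Fin m) (t : ℝ) :
    t ≤ orderStat v j ↔ countBelow v t ≤ j := by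
  refine ⟨fun ht => le_trans ?_ (countBelow_sort_le v j), fun h => ?_⟩
  · exact card_le_card fun i hi => by
      simp only [mem_filter, mem_univ, true_and] at hi ⊢
      exact hi.trans_le ht
  · by_contra! ht
    exact (lt_countBelow_of_sort_lt v j ht).not_ge h

lemma measurable_countBelow_apply {ι : Type*} [Fintype ι] (a : ι) :
    Measurable fun v : ι → ℝ => countBelow v (v a) := by
  simp only [countBelow, card_filter]
  exact Finset.measurable_sum _ fun i _ =>
    Measurable.ite (measurableSet_lt (f := fun v : ι → ℝ => v i) (g := fun v => v a)
      (measurable_pi_apply i) (measurable_pi_apply a))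
      measurable_const measurable_const

section Probability

variable {Ω : Type*} [MeasurableSpace Ω] (P : Measure Ω)

lemma natCast_le_sum_measure_of_le_card [IsProbabilityMeasure P] {ι : Type*} [Fintype ι]
    {p : ι → Ω → Prop} [∀ a ω, Decidable (p a ω)] (hp : ∀ a, MeasurableSet {ω | p a ω})
    {k : ℕ} (hk : ∀ ω, k ≤ #{a | p a ω}) :
    (k : ENNReal) ≤ ∑ a, P {ω | p a ω} := by
  calc (k : ENNReal) = ∫⁻ _, (k : ENNReal) ∂P := by simp
    _ ≤ ∫⁻ ω, ∑ a, {ω | p a ω}.indicator 1 ω ∂P := lintegral_mono fun ω => by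
        simp only [Set.indicator_apply, Set.mem_ofPred_eq, Pi.one_apply, sum_boole]
        exact_mod_cast hk ω
    _ = ∑ a, P {ω | p a ω} := by
        rw [lintegral_finsetSum _ fun a _ => measurable_one.indicator (hp a)]
        simp only [lintegral_indicator_one (hp _)]

lemma measure_preimage_comp_perm {ι α : Type*} [MeasurableSpace α] {X : Ω → ι → α}
    (hX : Measurable X) {π : Equiv.Perm ι}
    (hπ : Measure.map (fun ω i => X ω (π i)) P = Measure.map X P)
    {S : Set (ι → α)} (hS : MeasurableSet S) :
    P ((fun ω i => X ω (π i)) ⁻¹' S) = P (X ⁻¹' S) := by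
  have hXπ : Measurable fun ω i => X ω (π i) :=
    measurable_pi_lambda _ fun i => (measurable_pi_apply (π i)).comp hX
  rw [← Measure.map_apply hXπ hS, hπ, Measure.map_apply hX hS]

end Probability

/-- If `Z 0, ..., Z n` are exchangeable real-valued random variables, then the probability
that the last one is at most the `k`-th smallest of the first `n` is at least `k / (n + 1)`. -/
theorem exchangeable_rank_bound
    {Ω : Type*} [MeasurableSpace Ω] (P : Measure Ω) [IsProbabilityMeasure P]
    {n : ℕ} (Z : Fin (n + 1) → Ω → ℝ)
    (hZ : ∀ i, Measurable (Z i))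
    (hexch : ∀ π : Equiv.Perm (Fin (n + 1)),
      Measure.map (fun ω (i : Fin (n + 1)) => Z (π i) ω) P
        = Measure.map (fun ω (i : Fin (n + 1)) => Z i ω) P)
    (k : ℕ) (hk1 : 1 ≤ k) (hkn : k ≤ n) :
    P {ω | Z (Fin.last n) ω ≤
        orderStat (fun i : Fin n => Z i.castSucc ω) ⟨k - 1, by omega⟩}
      ≥ (k : ENNReal) / ((n : ENNReal) + 1) := by
  set X : Ω → Fin (n + 1) → ℝ := fun ω i => Z i ω
  have hX : Measurable X := measurable_pi_lambda _ hZ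
  have hS : ∀ a, MeasurableSet {v : Fin (n + 1) → ℝ | countBelow v (v a) < k} := fun a =>
    measurable_countBelow_apply a measurableSet_Iio
  have hA : ∀ a, MeasurableSet {ω | countBelow (X ω) (X ω a) < k} := fun a => hX (hS a)
  have hA_eq : ∀ a, P {ω | countBelow (X ω) (X ω a) < k}
      = P {ω | countBelow (X ω) (X ω (Fin.last n)) < k} := fun a => by
    refine (congrArg P ?_).trans
      (measure_preimage_comp_perm P hX (hexch (Equiv.swap a (Fin.last n))) (hS (Fin.last n)))
    ext ω
    simp only [Set.mem_preimage, Set.mem_ofPred_eq]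
    rw [← Function.comp_def, countBelow_comp_perm, Equiv.swap_apply_right]
  have hsum : (k : ENNReal) ≤ (n + 1) * P {ω | countBelow (X ω) (X ω (Fin.last n)) < k} :=
    calc (k : ENNReal) ≤ ∑ a, P {ω | countBelow (X ω) (X ω a) < k} :=
          natCast_le_sum_measure_of_le_card P hA
            fun ω => le_card_filter_countBelow_lt (X ω) (by omega)
      _ = _ := by simp [hA_eq]
  have htarget : {ω | Z (Fin.last n) ω ≤
      orderStat (fun i : Fin n => Z i.castSucc ω) ⟨k - 1, by omega⟩}
      = {ω | countBelow (X ω) (X ω (Fin.last n)) < k} := by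
    ext ω
    simp only [Set.mem_ofPred_eq, le_orderStat_iff, X]
    rw [countBelow_castSucc_last (fun i => Z i ω)]
    omega
  rw [htarget, ge_iff_le, ENNReal.div_le_iff_le_mul (by simp) (by simp), mul_comm]
  exact hsum
end

section
/- Inductive Conformal Prediction coverage guarantee: let (X_1, Y_1), ..., (X_{n+1}, Y_{n+1}) be i.i.d. random pairs with values in a measurable space Θ × [0,1], and let f : Θ → ℝ be a fixed measurable function (a deterministic predictor chosen independently of these pairs). Define the nonconformity scores V_i = |Y_i − f(X_i)| for i = 1, ..., n+1. Fix ε ∈ (0,1) with ⌈(n+1)(1−ε)⌉ ≤ n, and let τ_ε be the ⌈(n+1)(1−ε)⌉-th smallest value among V_1, ..., V_n (the calibration scores). Then P(|Y_{n+1} − f(X_{n+1})| ≤ τ_ε) ≥ 1 − ε. -/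
/-!
Call an index `j` *high* in a vector `v` of scores when at most `m` coordinates of `v` are
`≥ v j`. In any vector at most `m` indices are high. The `n + 1` i.i.d. scores are
exchangeable, so every index is high with the same probability, which is therefore at most
`m / (n + 1)`. If the test score exceeds the `K`-th smallest calibration score, where
`K = ⌈(n + 1)(1 - ε)⌉`, then at most `n + 1 - K ≤ (n + 1) ε` scores are `≥` it, so the
test index is high for `m = n + 1 - K`.
-/

open MeasureTheory ProbabilityTheory

open Finset

namespace ConformalPrediction

section Counting

variable {ι α : Type*} [Fintype ι] [LinearOrder α]

noncomputable def countGE (v : ι → α) (j : ι) : ℕ := #{i | v j ≤ v i}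

lemma countGE_comp_perm (v : ι → α) (e : Equiv.Perm ι) (j : ι) :
    countGE (v ∘ e) j = countGE v (e j) :=
  card_equiv e fun i => by simp

lemma card_countGE_le (v : ι → α) (m : ℕ) : #{j | countGE v j ≤ m} ≤ m := by
  set S : Finset ι := {j | countGE v j ≤ m}
  obtain hS | hS := S.eq_empty_or_nonempty
  · simp [hS]
  -- the index of least value in `S` has all of `S` in its count
  obtain ⟨j, hjS, hjmin⟩ := S.exists_min_image v hS
  calc #S ≤ countGE v j := card_le_card fun i hi => mem_filter.mpr ⟨mem_univ i, hjmin i hi⟩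
    _ ≤ m := (mem_filter.mp hjS).2

end Counting

lemma card_filter_ge_le_of_orderStat_lt {n : ℕ} (w : Fin n → ℝ) (k : Fin n) {x : ℝ}
    (h : orderStat w k < x) : #{j | x ≤ w j} ≤ n - 1 - k := by
  -- `(Tuple.sort w).symm` sends every such `j` to a rank above `k`
  rw [← Fin.card_Ioi]
  refine card_le_card_of_injOn (Tuple.sort w).symm (fun j hj => ?_)
    (Tuple.sort w).symm.injective.injOn
  simp only [coe_filter, mem_univ, true_and, Set.mem_ofPred_eq] at hj
  rw [coe_Ioi, Set.mem_Ioi, ← not_le]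
  intro hle
  have := Tuple.monotone_sort w hle
  simp only [Function.comp_apply, Equiv.apply_symm_apply] at this
  exact absurd (hj.trans this) (not_le.mpr h)

lemma countGE_last_le_of_orderStat_lt {n k : ℕ} (v : Fin (n + 1) → ℝ) (hk : k < n)
    (h : orderStat (fun i => v i.castSucc) ⟨k, hk⟩ < v (Fin.last n)) :
    countGE v (Fin.last n) ≤ n - k := by
  have hinit := card_filter_ge_le_of_orderStat_lt _ _ h
  rw [Fin.val_mk] at hinit
  rw [countGE, Fin.univ_castSuccEmb, filter_cons, if_pos le_rfl, card_cons, filter_map, card_map]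
  exact (Nat.add_le_add_right hinit 1).trans (by omega)

section Exchangeable

variable {ι α : Type*} [Fintype ι] [MeasurableSpace α]

def IsExchangeable (μ : Measure (ι → α)) : Prop :=
  ∀ e : Equiv.Perm ι, MeasurePreserving (fun v => v ∘ e) μ μ

lemma isExchangeable_pi (ν : Measure α) [SigmaFinite ν] :
    IsExchangeable (Measure.pi fun _ : ι => ν) := fun e => by
  convert measurePreserving_piCongrLeft (fun _ : ι => ν) e.symm using 1
  ext v i
  simpa using (MeasurableEquiv.piCongrLeft_apply_apply e.symm (β := fun _ => α) v (e i)).symm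

lemma isExchangeable_map_of_iIndepFun {Ω : Type*} [MeasurableSpace Ω] {P : Measure Ω}
    {V : ι → Ω → α} (hV : ∀ i, AEMeasurable (V i) P) (hind : iIndepFun V P)
    (ν : Measure α) [SigmaFinite ν] (hid : ∀ i, P.map (V i) = ν) :
    IsExchangeable (P.map fun ω i => V i ω) := by
  rw [hind.map_fun_eq_pi_map hV, funext hid]
  exact isExchangeable_pi ν

variable [TopologicalSpace α] [LinearOrder α] [OrderClosedTopology α]
  [SecondCountableTopology α] [OpensMeasurableSpace α]

lemma measurableSet_countGE_le (j : ι) (m : ℕ) :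
    MeasurableSet {v : ι → α | countGE v j ≤ m} := by
  have : Measurable fun v : ι → α => countGE v j := by
    simp only [countGE, card_filter]
    exact Finset.measurable_sum _ fun i _ => Measurable.ite
      (measurableSet_le (measurable_pi_apply j) (measurable_pi_apply i))
      measurable_const measurable_const
  exact this measurableSet_Iic

/-- Exchangeability makes every index equally likely to satisfy `countGE v j ≤ m`, while
`card_countGE_le` bounds the expected number of such indices by `m`. -/
theorem IsExchangeable.card_mul_measure_countGE_le {μ : Measure (ι → α)}
    (hμ : IsExchangeable μ) (j : ι) (m : ℕ) :
    Fintype.card ι * μ {v | countGE v j ≤ m} ≤ m * μ Set.univ := by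
  classical
  set B : ι → Set (ι → α) := fun i => {v | countGE v i ≤ m}
  have hB : ∀ i, MeasurableSet (B i) := fun i => measurableSet_countGE_le i m
  have hsymm : ∀ i, μ (B i) = μ (B j) := fun i => by
    rw [← (hμ (Equiv.swap j i)).measure_preimage (hB j).nullMeasurableSet]
    congr 1
    ext v
    simp [B, countGE_comp_perm]
  calc Fintype.card ι * μ (B j) = ∑ i, μ (B i) := by simp [hsymm]
    _ = ∫⁻ v, ∑ i, (B i).indicator 1 v ∂μ := by
      rw [lintegral_finsetSum _ fun i _ => measurable_one.indicator (hB i)]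
      simp [hB]
    _ = ∫⁻ v, (#{i | countGE v i ≤ m} : ENNReal) ∂μ := by
      simp [B, Set.indicator_apply]
    _ ≤ ∫⁻ _, (m : ENNReal) ∂μ :=
      lintegral_mono fun v => Nat.cast_le.mpr (card_countGE_le v m)
    _ = m * μ Set.univ := lintegral_const _

theorem IsExchangeable.measure_countGE_le {μ : Measure (ι → α)} [IsProbabilityMeasure μ]
    (hμ : IsExchangeable μ) (j : ι) (m : ℕ) :
    μ {v | countGE v j ≤ m} ≤ m / Fintype.card ι := by
  have : Nonempty ι := ⟨j⟩
  have hcard : (Fintype.card ι : ENNReal) ≠ 0 := Nat.cast_ne_zero.mpr Fintype.card_ne_zero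
  rw [ENNReal.le_div_iff_mul_le (Or.inl hcard) (Or.inl (ENNReal.natCast_ne_top _)), mul_comm]
  simpa using hμ.card_mul_measure_countGE_le j m

theorem measure_countGE_le_of_iIndepFun {Ω : Type*} [MeasurableSpace Ω] {P : Measure Ω}
    [IsProbabilityMeasure P] {V : ι → Ω → α} (hV : ∀ i, Measurable (V i))
    (hind : iIndepFun V P) (ν : Measure α) (hid : ∀ i, P.map (V i) = ν) (j : ι) (m : ℕ) :
    P {ω | countGE (fun i => V i ω) j ≤ m} ≤ m / Fintype.card ι := by
  have : IsFiniteMeasure ν := hid j ▸ inferInstance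
  have := Measure.isProbabilityMeasure_map (μ := P) (measurable_pi_lambda _ hV).aemeasurable
  calc P {ω | countGE (fun i => V i ω) j ≤ m}
      = P.map (fun ω i => V i ω) {v | countGE v j ≤ m} :=
        (Measure.map_apply (measurable_pi_lambda _ hV) (measurableSet_countGE_le j m)).symm
    _ ≤ m / Fintype.card ι :=
        (isExchangeable_map_of_iIndepFun (fun i => (hV i).aemeasurable) hind ν hid)
          |>.measure_countGE_le j m

end Exchangeable

lemma natCast_sub_div_le_ofReal {N K : ℕ} {ε : ℝ} (hε : 0 ≤ ε) (hK : N * (1 - ε) ≤ K) :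
    ((N - K : ℕ) : ENNReal) / N ≤ ENNReal.ofReal ε := by
  have hreal : ((N - K : ℕ) : ℝ) ≤ ε * N := by
    rcases le_total N K with h | h
    · rw [Nat.sub_eq_zero_of_le h, Nat.cast_zero]
      positivity
    · rw [Nat.cast_sub h]
      linarith
  refine ENNReal.div_le_of_le_mul ?_
  rw [← ENNReal.ofReal_natCast, ← ENNReal.ofReal_natCast, ← ENNReal.ofReal_mul hε]
  exact ENNReal.ofReal_le_ofReal hreal

end ConformalPrediction

open ConformalPrediction

/-- Inductive Conformal Prediction coverage guarantee: for i.i.d. pairs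
`(X i, Y i)` with `Y i ∈ [0,1]`, a fixed measurable predictor `f`, nonconformity scores
`V i = |Y i - f (X i)|`, and `τ_ε` the `⌈(n+1)(1-ε)⌉`-th smallest of the first `n` scores,
the probability that `|Y (n+1) - f (X (n+1))| ≤ τ_ε` is at least `1 - ε`. -/
theorem icp_coverage
    {Ω Θ : Type*} [MeasurableSpace Ω] [MeasurableSpace Θ]
    (P : Measure Ω) [IsProbabilityMeasure P]
    {n : ℕ} (X : Fin (n + 1) → Ω → Θ) (Y : Fin (n + 1) → Ω → ℝ)
    (hX : ∀ i, Measurable (X i)) (hY : ∀ i, Measurable (Y i))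
    (μ : Measure (Θ × ℝ))
    (hident : ∀ i, Measure.map (fun ω => (X i ω, Y i ω)) P = μ)
    (hindep : iIndepFun
      (fun i ω => (X i ω, Y i ω)) P)
    (f : Θ → ℝ) (hf : Measurable f)
    (ε : ℝ) (hε : ε ∈ Set.Ioo (0 : ℝ) 1)
    (hm : ⌈((n : ℝ) + 1) * (1 - ε)⌉₊ ≤ n) :
    P {ω | |Y (Fin.last n) ω - f (X (Fin.last n) ω)| ≤
        orderStat (fun i : Fin n => |Y i.castSucc ω - f (X i.castSucc ω)|)
          ⟨⌈((n : ℝ) + 1) * (1 - ε)⌉₊ - 1, by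
            have h1 : 0 < ⌈((n : ℝ) + 1) * (1 - ε)⌉₊ :=
              Nat.ceil_pos.mpr (by nlinarith [hε.1, hε.2, Nat.cast_nonneg (α := ℝ) n])
            omega⟩}
      ≥ ENNReal.ofReal (1 - ε) := by
  set K := ⌈((n : ℝ) + 1) * (1 - ε)⌉₊
  have hK : 0 < K := Nat.ceil_pos.mpr (by nlinarith [hε.1, hε.2, Nat.cast_nonneg (α := ℝ) n])
  set g : Θ × ℝ → ℝ := fun p => |p.2 - f p.1|
  have hg : Measurable g := (measurable_snd.sub (hf.comp measurable_fst)).abs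
  set V : Fin (n + 1) → Ω → ℝ := fun i => g ∘ fun ω => (X i ω, Y i ω)
  have hV : ∀ i, Measurable (V i) := fun i => hg.comp ((hX i).prodMk (hY i))
  have hlaw : ∀ i, P.map (V i) = μ.map g := fun i => by
    rw [← hident i, Measure.map_map hg ((hX i).prodMk (hY i))]
  set A := {ω | countGE (fun i => V i ω) (Fin.last n) ≤ n + 1 - K}
  have hA : P A ≤ ENNReal.ofReal ε := by
    refine (measure_countGE_le_of_iIndepFun hV (hindep.comp _ fun _ => hg) _ hlaw _ _).trans ?_
    rw [Fintype.card_fin]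
    exact natCast_sub_div_le_ofReal hε.1.le (by push_cast; exact Nat.le_ceil _)
  have hsub : Aᶜ ⊆ {ω | V (Fin.last n) ω ≤
      orderStat (fun i : Fin n => V i.castSucc ω) ⟨K - 1, by omega⟩} := fun ω hω => by
    by_contra hlt
    have hcount := countGE_last_le_of_orderStat_lt (fun i => V i ω) _ (not_le.mp hlt)
    exact hω (show countGE (fun i => V i ω) (Fin.last n) ≤ n + 1 - K by omega)
  calc ENNReal.ofReal (1 - ε) = 1 - ENNReal.ofReal ε := by
        rw [ENNReal.ofReal_sub _ hε.1.le, ENNReal.ofReal_one]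
    _ ≤ 1 - P A := tsub_le_tsub_left hA 1
    _ = P Aᶜ := (prob_compl_eq_one_sub ((measurableSet_countGE_le _ _).preimage
          (measurable_pi_lambda _ hV))).symm
    _ ≤ _ := measure_mono hsub
end

section
/- Conformal guarantee with estimated targets (combination of Theorem 1 with the Chernoff bound for SMC): let X_1, ..., X_{n+1} be i.i.d. random variables with values in a measurable space Θ, let p : Θ → [0,1] be a measurable function (the true satisfaction function), and suppose that conditionally on X_i = θ, the observed label Ȳ_i is the mean of M i.i.d. Bernoulli(p(θ)) random variables, with the (X_i, Ȳ_i) i.i.d. across i = 1, ..., n+1. Let f : Θ → ℝ be a fixed measurable predictor and u : Θ → ℝ a fixed measurable function with u > 0 everywhere, both chosen independently of these pairs. Define Ṽ_i = |Ȳ_i − f(X_i)| / u(X_i), fix ε ∈ (0,1) with ⌈(n+1)(1−ε)⌉ ≤ n, and let τ̃_ε be the ⌈(n+1)(1−ε)⌉-th smallest of Ṽ_1, ..., Ṽ_n. Then for every η > 0, P(|p(X_{n+1}) − f(X_{n+1})| ≤ τ̃_ε · u(X_{n+1}) + η) ≥ 1 − ε − 2·exp(−2·M·η²). -/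
/-! The conformal error and the estimation error are bounded separately and combined by a union
bound. The scores `Ṽ i` are i.i.d., hence exchangeable: summing over `i` the probability that
`Ṽ i` has at least `k + 1` scores strictly below it counts at most `n - k` indices per outcome, so
the test score exceeds the `k`-th order statistic of the calibration scores with probability at
most `(n - k) / (n + 1) ≤ ε`; outside that event `|Ȳ - f| ≤ τ̃_ε u`. By Hoeffding's inequality,
`|Ȳ - p| ≤ η` fails with probability at most `2 exp (-2 M η²)`, and the triangle inequality
gives `|p - f| ≤ τ̃_ε u + η` on the intersection. -/

open MeasureTheory ProbabilityTheory

/-- The Bernoulli distribution with success probability `p`, as a measure on `ℝ`: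
it puts mass `p` on `1` and mass `1 - p` on `0`. -/
noncomputable def bernoulliReal (p : ℝ) : Measure ℝ :=
  ENNReal.ofReal p • Measure.dirac 1 + ENNReal.ofReal (1 - p) • Measure.dirac 0

open Finset Real

section StrictRank

variable {ι α : Type*} [Fintype ι] [LinearOrder α]

def strictRank (v : ι → α) (i : ι) : ℕ := #{j | v j < v i}

lemma strictRank_comp_perm (v : ι → α) (σ : Equiv.Perm ι) (i : ι) :
    strictRank (v ∘ σ) i = strictRank v (σ i) :=
  card_equiv σ (by simp)

/-- The at least `k` indices strictly below the minimum of `{i | k ≤ strictRank v i}` lie outside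
it. -/
lemma card_le_strictRank_le (v : ι → α) (k : ℕ) :
    #{i | k ≤ strictRank v i} ≤ Fintype.card ι - k := by
  classical
  set S : Finset ι := {i | k ≤ strictRank v i}
  obtain hS | hS := S.eq_empty_or_nonempty
  · simp [hS]
  obtain ⟨i₀, hi₀, hmin⟩ := S.exists_min_image v hS
  have hbelow : ({j | v j < v i₀} : Finset ι) ⊆ Sᶜ := fun j hj =>
    mem_compl.2 fun hjS => (not_lt.2 (hmin j hjS)) (mem_filter.1 hj).2
  have hk : k ≤ #{j | v j < v i₀} := (mem_filter.1 hi₀).2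
  have hbelow_card := card_le_card hbelow
  rw [card_compl] at hbelow_card
  have := card_le_univ S
  omega

end StrictRank

lemma lt_card_lt_of_orderStat_lt {n : ℕ} (v : Fin n → ℝ) (k : Fin n) {t : ℝ}
    (h : orderStat v k < t) : (k : ℕ) < #{i | v i < t} :=
  calc (k : ℕ) < #(Iic k) := by rw [Fin.card_Iic]; omega
    _ ≤ #{i | v i < t} := card_le_card_of_injOn (Tuple.sort v)
        (fun i hi => by
          simp only [coe_filter, mem_univ, true_and, Set.mem_ofPred_eq]
          exact (Tuple.monotone_sort v (mem_Iic.1 hi)).trans_lt h)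
        (Tuple.sort v).injective.injOn

lemma lt_strictRank_last_of_orderStat_lt {n : ℕ} (v : Fin (n + 1) → ℝ) (k : Fin n)
    (h : orderStat (fun i => v i.castSucc) k < v (Fin.last n)) :
    (k : ℕ) < strictRank v (Fin.last n) :=
  (lt_card_lt_of_orderStat_lt _ k h).trans_le <| card_le_card_of_injOn Fin.castSucc
    (fun i hi => by simpa using hi) (Fin.castSucc_injective n).injOn

section Exchangeability

variable {ι : Type*} [Fintype ι]

lemma measurableSet_le_strictRank (i : ι) (k : ℕ) :
    MeasurableSet {v : ι → ℝ | k ≤ strictRank v i} := by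
  refine measurableSet_le measurable_const ?_
  unfold strictRank
  simp_rw [card_filter]
  exact Finset.measurable_sum _ fun j _ => Measurable.ite
    (measurableSet_lt (measurable_pi_apply j) (measurable_pi_apply i))
    measurable_const measurable_const

lemma pi_le_strictRank_eq (μ : Measure ℝ) [SigmaFinite μ] (i i' : ι) (k : ℕ) :
    Measure.pi (fun _ : ι => μ) {v | k ≤ strictRank v i} =
      Measure.pi (fun _ : ι => μ) {v | k ≤ strictRank v i'} := by
  classical
  set σ := Equiv.swap i i'
  rw [← (measurePreserving_piCongrLeft (fun _ : ι => μ) σ).symm.measure_preimage_equiv]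
  congr 1
  ext v
  rw [Set.mem_preimage, Set.mem_ofPred_eq, Set.mem_ofPred_eq,
    show (MeasurableEquiv.piCongrLeft (fun _ => ℝ) σ).symm v = v ∘ σ from rfl,
    strictRank_comp_perm, Equiv.swap_apply_left]

/-- By exchangeability all `card ι` terms of `∑ i, ρ {v | k ≤ strictRank v i}` are equal, and the
sum is the expected number of indices of rank at least `k`. -/
lemma card_mul_pi_le_strictRank_le (μ : Measure ℝ) [IsProbabilityMeasure μ] (i : ι) (k : ℕ) :
    Fintype.card ι * Measure.pi (fun _ : ι => μ) {v | k ≤ strictRank v i} ≤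
      (Fintype.card ι - k : ℕ) := by
  set ρ := Measure.pi (fun _ : ι => μ)
  calc Fintype.card ι * ρ {v | k ≤ strictRank v i}
      = ∑ j, ρ {v | k ≤ strictRank v j} := by
        rw [sum_congr rfl fun j _ => pi_le_strictRank_eq μ j i k, sum_const, card_univ,
          nsmul_eq_mul]
    _ = ∫⁻ v, ∑ j, {v | k ≤ strictRank v j}.indicator 1 v ∂ρ := by
        rw [lintegral_finsetSum _ fun j _ =>
          measurable_one.indicator (measurableSet_le_strictRank j k)]
        simp_rw [lintegral_indicator_one (measurableSet_le_strictRank _ k)]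
    _ ≤ ∫⁻ _, ((Fintype.card ι - k : ℕ) : ENNReal) ∂ρ := lintegral_mono fun v => by
        simp only [Set.indicator_apply, Set.mem_ofPred_eq, Pi.one_apply]
        rw [sum_boole]
        exact_mod_cast card_le_strictRank_le v k
    _ = (Fintype.card ι - k : ℕ) := by simp

end Exchangeability

lemma measure_orderStat_lt_le {Ω : Type*} [MeasurableSpace Ω] (P : Measure Ω)
    [IsProbabilityMeasure P] {n : ℕ} (V : Fin (n + 1) → Ω → ℝ) (hV : ∀ i, Measurable (V i))
    (hindep : iIndepFun V P) (μ : Measure ℝ) (hμ : ∀ i, P.map (V i) = μ) (k : Fin n) :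
    P {ω | orderStat (fun i => V i.castSucc ω) k < V (Fin.last n) ω} ≤
      ENNReal.ofReal ((n - k) / (n + 1)) := by
  have : IsProbabilityMeasure μ := hμ 0 ▸ Measure.isProbabilityMeasure_map (hV 0).aemeasurable
  have hW : Measurable fun ω i => V i ω := measurable_pi_lambda _ hV
  have hlaw : P.map (fun ω i => V i ω) = Measure.pi fun _ => μ := by
    rw [hindep.map_fun_eq_pi_map fun i => (hV i).aemeasurable, funext hμ]
  have hcard := card_mul_pi_le_strictRank_le μ (Fin.last n) (k + 1)
  rw [Fintype.card_fin, ← hlaw, Measure.map_apply hW (measurableSet_le_strictRank _ _)] at hcard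
  calc P {ω | orderStat (fun i => V i.castSucc ω) k < V (Fin.last n) ω}
      ≤ P ((fun ω i => V i ω) ⁻¹' {v | k + 1 ≤ strictRank v (Fin.last n)}) :=
        measure_mono fun ω hω => lt_strictRank_last_of_orderStat_lt (fun i => V i ω) k hω
    _ ≤ ((n + 1 - (k + 1) : ℕ) : ENNReal) / (n + 1 : ℕ) := by
        rw [ENNReal.le_div_iff_mul_le (by simp) (by simp), mul_comm]
        exact hcard
    _ = ENNReal.ofReal ((n - k) / (n + 1)) := by
        rw [ENNReal.ofReal_div_of_pos (by positivity), ← ENNReal.ofReal_natCast,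
          ← ENNReal.ofReal_natCast, Nat.add_sub_add_right, Nat.cast_sub k.isLt.le]
        push_cast
        rfl

section Hoeffding

variable {Ω : Type*} [MeasurableSpace Ω] {μ : Measure Ω} [IsProbabilityMeasure μ] {M : ℕ}
  {Y : Fin M → Ω → ℝ} {q η : ℝ}

lemma measureReal_mean_sub_ge_le (hM : 0 < M) (hindep : iIndepFun Y μ)
    (hY : ∀ j, AEMeasurable (Y j) μ) (hbdd : ∀ j, ∀ᵐ ω ∂μ, Y j ω ∈ Set.Icc 0 1)
    (hmean : ∀ j, μ[Y j] = q) (hη : 0 ≤ η) :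
    μ.real {ω | η ≤ (M : ℝ)⁻¹ * ∑ j, Y j ω - q} ≤ exp (-2 * M * η ^ 2) := by
  have hsubG : ∀ j ∈ (univ : Finset (Fin M)),
      HasSubgaussianMGF (fun ω => Y j ω - q) ((‖(1 : ℝ) - 0‖₊ / 2) ^ 2) μ :=
    fun j _ => hmean j ▸ hasSubgaussianMGF_of_mem_Icc (hY j) (hbdd j)
  have hcentered : iIndepFun (fun j ω => Y j ω - q) μ :=
    hindep.comp (fun _ x => x - q) fun _ => measurable_id.sub_const q
  have hMpos : (0 : ℝ) < M := by exact_mod_cast hM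
  have hset : {ω | η ≤ (M : ℝ)⁻¹ * ∑ j, Y j ω - q} = {ω | M * η ≤ ∑ j, (Y j ω - q)} := by
    ext ω
    simp only [Set.mem_ofPred_eq, sum_sub_distrib, sum_const, card_univ, Fintype.card_fin,
      nsmul_eq_mul]
    rw [← mul_le_mul_iff_right₀ hMpos, mul_sub, ← mul_assoc, mul_inv_cancel₀ hMpos.ne', one_mul]
  rw [hset]
  refine (HasSubgaussianMGF.measure_sum_ge_le_of_iIndepFun hcentered hsubG
    (by positivity)).trans_eq ?_
  congr 1
  simp only [sum_const, card_univ, Fintype.card_fin, nsmul_eq_mul]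
  push_cast
  norm_num
  field_simp
  ring

lemma measure_lt_abs_mean_sub_le (hM : 0 < M) (hindep : iIndepFun Y μ)
    (hY : ∀ j, AEMeasurable (Y j) μ) (hbdd : ∀ j, ∀ᵐ ω ∂μ, Y j ω ∈ Set.Icc 0 1)
    (hmean : ∀ j, μ[Y j] = q) (hη : 0 ≤ η) :
    μ {ω | η < |(M : ℝ)⁻¹ * ∑ j, Y j ω - q|} ≤ ENNReal.ofReal (2 * exp (-2 * M * η ^ 2)) := by
  have hupper := measureReal_mean_sub_ge_le hM hindep hY hbdd hmean hη
  -- the lower tail is the upper tail of the reflected variables `1 - Y j`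
  have hlower := measureReal_mean_sub_ge_le (Y := fun j ω => 1 - Y j ω) (q := 1 - q) hM
    (hindep.comp (fun _ x => 1 - x) fun _ => measurable_const.sub measurable_id)
    (fun j => aemeasurable_const.sub (hY j))
    (fun j => (hbdd j).mono fun ω h => ⟨by linarith [h.2], by linarith [h.1]⟩)
    (fun j => by
      rw [integral_sub (integrable_const 1) (Integrable.of_mem_Icc 0 1 (hY j) (hbdd j)), hmean j]
      simp)
    hη
  have hMpos : (0 : ℝ) < M := by exact_mod_cast hM
  have hreflect : ∀ ω, (M : ℝ)⁻¹ * ∑ j, (1 - Y j ω) - (1 - q) =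
      -((M : ℝ)⁻¹ * ∑ j, Y j ω - q) := by
    intro ω
    simp only [sum_sub_distrib, sum_const, card_univ, Fintype.card_fin, nsmul_eq_mul, mul_one]
    field_simp
    ring
  simp only [hreflect] at hlower
  calc μ {ω | η < |(M : ℝ)⁻¹ * ∑ j, Y j ω - q|}
      ≤ μ ({ω | η ≤ (M : ℝ)⁻¹ * ∑ j, Y j ω - q} ∪ {ω | η ≤ -((M : ℝ)⁻¹ * ∑ j, Y j ω - q)}) :=
        measure_mono fun ω hω => by
          rcases le_abs'.1 (le_of_lt (Set.mem_ofPred_eq ▸ hω)) with h | h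
          · exact Or.inr (show η ≤ -_ by linarith)
          · exact Or.inl h
    _ ≤ μ {ω | η ≤ (M : ℝ)⁻¹ * ∑ j, Y j ω - q} + μ {ω | η ≤ -((M : ℝ)⁻¹ * ∑ j, Y j ω - q)} :=
        measure_union_le _ _
    _ ≤ ENNReal.ofReal (exp (-2 * M * η ^ 2)) + ENNReal.ofReal (exp (-2 * M * η ^ 2)) := by
        gcongr <;> rw [← ofReal_measureReal] <;> exact ENNReal.ofReal_le_ofReal ‹_›
    _ = ENNReal.ofReal (2 * exp (-2 * M * η ^ 2)) := by
        rw [← ENNReal.ofReal_add (by positivity) (by positivity), two_mul]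

end Hoeffding

section Bernoulli

variable {q : ℝ}

lemma isProbabilityMeasure_bernoulliReal (hq : q ∈ Set.Icc 0 1) :
    IsProbabilityMeasure (bernoulliReal q) :=
  ⟨by simp [bernoulliReal, ← ENNReal.ofReal_add hq.1 (sub_nonneg.2 hq.2)]⟩

lemma ae_bernoulliReal_mem_Icc : ∀ᵐ x ∂bernoulliReal q, x ∈ Set.Icc (0 : ℝ) 1 := by
  rw [ae_iff]
  simp [bernoulliReal]

lemma integral_bernoulliReal (hq : q ∈ Set.Icc 0 1) : ∫ x, x ∂bernoulliReal q = q := by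
  rw [bernoulliReal, integral_add_measure, integral_smul_measure, integral_smul_measure]
  · simp [integral_dirac, ENNReal.toReal_ofReal hq.1]
  all_goals exact (integrable_dirac (by simp)).smul_measure ENNReal.ofReal_ne_top

lemma pi_bernoulliReal_lt_abs_mean_sub_le (hq : q ∈ Set.Icc 0 1) {M : ℕ} (hM : 0 < M) {η : ℝ}
    (hη : 0 ≤ η) :
    Measure.pi (fun _ : Fin M => bernoulliReal q) {y | η < |(M : ℝ)⁻¹ * ∑ j, y j - q|} ≤
      ENNReal.ofReal (2 * exp (-2 * M * η ^ 2)) := by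
  have := isProbabilityMeasure_bernoulliReal hq
  have hcoord (j : Fin M) := measurePreserving_eval (fun _ : Fin M => bernoulliReal q) j
  refine measure_lt_abs_mean_sub_le hM
    (iIndepFun_pi (X := fun _ => id) fun _ => aemeasurable_id)
    (fun j => (measurable_pi_apply j).aemeasurable)
    (fun j => (hcoord j).quasiMeasurePreserving.ae ae_bernoulliReal_mem_Icc)
    (fun j => ?_) hη
  rw [integral_eval, integral_bernoulliReal hq]

lemma compProd_lt_abs_mean_sub_le {Θ : Type*} [MeasurableSpace Θ] (ν : Measure Θ)
    [IsProbabilityMeasure ν] {M : ℕ} (hM : 0 < M) (κ : Kernel Θ (Fin M → ℝ)) [IsSFiniteKernel κ]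
    {p : Θ → ℝ} (hp : Measurable p) (hp01 : ∀ θ, p θ ∈ Set.Icc 0 1)
    (hκ : ∀ θ, κ θ = Measure.pi fun _ => bernoulliReal (p θ)) {η : ℝ} (hη : 0 ≤ η) :
    (ν ⊗ₘ κ) {z | η < |(M : ℝ)⁻¹ * ∑ j, z.2 j - p z.1|} ≤
      ENNReal.ofReal (2 * exp (-2 * M * η ^ 2)) := by
  rw [Measure.compProd_apply (measurableSet_lt measurable_const (by fun_prop))]
  refine (lintegral_mono (g := fun _ => ENNReal.ofReal (2 * exp (-2 * M * η ^ 2)))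
    fun θ => ?_).trans_eq (by simp)
  rw [hκ]
  exact pi_bernoulliReal_lt_abs_mean_sub_le (hp01 θ) hM hη

end Bernoulli

lemma abs_sub_le_mul_add_of_div_le {y a b u τ η : ℝ} (hu : 0 < u) (hτ : |y - a| / u ≤ τ)
    (hy : |y - b| ≤ η) : |b - a| ≤ τ * u + η := by
  rw [div_le_iff₀ hu] at hτ
  linarith [abs_sub_le b y a, abs_sub_comm b y]

lemma ofReal_one_sub_sub_le_measure {Ω : Type*} [MeasurableSpace Ω] (P : Measure Ω)
    [IsProbabilityMeasure P] {s A B : Set Ω} (hs : sᶜ ⊆ A ∪ B) {a b : ℝ} (ha : 0 ≤ a)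
    (hb : 0 ≤ b) (hA : P A ≤ ENNReal.ofReal a) (hB : P B ≤ ENNReal.ofReal b) :
    ENNReal.ofReal (1 - a - b) ≤ P s := by
  have hcompl : P sᶜ ≤ ENNReal.ofReal (a + b) := by
    rw [ENNReal.ofReal_add ha hb]
    exact (measure_mono hs).trans ((measure_union_le A B).trans (add_le_add hA hB))
  calc ENNReal.ofReal (1 - a - b) = 1 - ENNReal.ofReal (a + b) := by
        rw [sub_sub, ENNReal.ofReal_sub _ (add_nonneg ha hb), ENNReal.ofReal_one]
    _ ≤ 1 - P sᶜ := tsub_le_tsub_left hcompl 1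
    _ ≤ P s := by
        rw [tsub_le_iff_right, ← measure_univ (μ := P), ← Set.union_compl_self s]
        exact measure_union_le s sᶜ

/-- Conformal guarantee with estimated targets: the parameters `X i` are i.i.d. with law `ν`;
conditionally on `X i = θ`, the `M` simulation outcomes `ℓ i 0, ..., ℓ i (M-1)` are i.i.d.
`Bernoulli (p θ)` (the joint law of `(X i, (ℓ i j)_j)` is `ν ⊗ₘ κ` where
`κ θ = ⨂ j, Bernoulli (p θ)`), independently across `i`. The observed label is the empirical
mean `Ȳ i = (1/M) * ∑ j, ℓ i j`. Running normalized inductive conformal prediction against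
the estimates `Ȳ i` with predictor `f` and positive normalizing function `u`, with `τ̃_ε` the
`⌈(n+1)(1-ε)⌉`-th smallest of the first `n` normalized scores, for every `η > 0` the true
satisfaction probability `p (X (n+1))` satisfies
`P(|p (X (n+1)) - f (X (n+1))| ≤ τ̃_ε * u (X (n+1)) + η) ≥ 1 - ε - 2 * exp (-2 * M * η ^ 2)`. -/
theorem nicp_coverage_estimated_targets
    {Ω Θ : Type*} [MeasurableSpace Ω] [MeasurableSpace Θ]
    (P : Measure Ω) [IsProbabilityMeasure P]
    {n : ℕ} (M : ℕ) (hM : 1 ≤ M)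
    (X : Fin (n + 1) → Ω → Θ) (hX : ∀ i, Measurable (X i))
    (ℓ : Fin (n + 1) → Fin M → Ω → ℝ) (hℓ : ∀ i j, Measurable (ℓ i j))
    (p : Θ → ℝ) (hp : Measurable p) (hp01 : ∀ θ, p θ ∈ Set.Icc (0 : ℝ) 1)
    (ν : Measure Θ) [IsProbabilityMeasure ν]
    (κ : Kernel Θ (Fin M → ℝ)) [IsMarkovKernel κ]
    (hκ : ∀ θ, κ θ = Measure.pi (fun _ : Fin M => bernoulliReal (p θ)))
    (hlaw : ∀ i, Measure.map (fun ω => (X i ω, fun j => ℓ i j ω)) P = ν ⊗ₘ κ)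
    (hindep : iIndepFun
      (fun i ω => (X i ω, fun j => ℓ i j ω)) P)
    (f : Θ → ℝ) (hf : Measurable f)
    (u : Θ → ℝ) (hu : Measurable u) (hupos : ∀ θ, 0 < u θ)
    (ε : ℝ) (hε : ε ∈ Set.Ioo (0 : ℝ) 1)
    (hm : ⌈((n : ℝ) + 1) * (1 - ε)⌉₊ ≤ n)
    (η : ℝ) (hη : 0 < η) :
    P {ω | |p (X (Fin.last n) ω) - f (X (Fin.last n) ω)| ≤
        orderStat
            (fun i : Fin n =>
              |(M : ℝ)⁻¹ * (∑ j, ℓ i.castSucc j ω) - f (X i.castSucc ω)|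
                / u (X i.castSucc ω))
            ⟨⌈((n : ℝ) + 1) * (1 - ε)⌉₊ - 1, by
              have h1 : 0 < ⌈((n : ℝ) + 1) * (1 - ε)⌉₊ :=
                Nat.ceil_pos.mpr (by nlinarith [hε.1, hε.2, Nat.cast_nonneg (α := ℝ) n])
              omega⟩
          * u (X (Fin.last n) ω) + η}
      ≥ ENNReal.ofReal (1 - ε - 2 * Real.exp (-2 * M * η ^ 2)) := by
  set c := ⌈((n : ℝ) + 1) * (1 - ε)⌉₊
  have hc_pos : 0 < c := Nat.ceil_pos.mpr (by nlinarith [hε.1, hε.2, Nat.cast_nonneg (α := ℝ) n])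
  set k : Fin n := ⟨c - 1, by omega⟩
  have hquantile : ((n : ℝ) - k) / (n + 1) ≤ ε := by
    have hceil : ((n : ℝ) + 1) * (1 - ε) ≤ c := Nat.le_ceil _
    rw [div_le_iff₀ (by positivity), show ((k : ℕ) : ℝ) = c - 1 by simp [k, Nat.cast_sub hc_pos]]
    linarith
  let score : Θ × (Fin M → ℝ) → ℝ := fun z => |(M : ℝ)⁻¹ * ∑ j, z.2 j - f z.1| / u z.1
  let pair : Fin (n + 1) → Ω → Θ × (Fin M → ℝ) := fun i ω => (X i ω, fun j => ℓ i j ω)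
  have hscore : Measurable score := by fun_prop
  have hpair (i : Fin (n + 1)) : Measurable (pair i) := by fun_prop
  have hconformal := measure_orderStat_lt_le P (fun i => score ∘ pair i)
    (fun i => hscore.comp (hpair i)) (hindep.comp (fun _ => score) fun _ => hscore)
    ((ν ⊗ₘ κ).map score) (fun i => by rw [← Measure.map_map hscore (hpair i), hlaw i]) k
  have hestimate : P (pair (Fin.last n) ⁻¹'
      {z | η < |(M : ℝ)⁻¹ * ∑ j, z.2 j - p z.1|}) ≤ ENNReal.ofReal (2 * exp (-2 * M * η ^ 2)) := by
    rw [← Measure.map_apply (hpair _) (measurableSet_lt measurable_const (by fun_prop)), hlaw]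
    exact compProd_lt_abs_mean_sub_le ν hM κ hp hp01 hκ hη.le
  refine ofReal_one_sub_sub_le_measure P (fun ω hω => ?_) hε.1.le (by positivity)
    (hconformal.trans (ENNReal.ofReal_le_ofReal hquantile)) hestimate
  by_contra hgood
  simp only [Set.mem_union, Set.mem_preimage, Set.mem_ofPred_eq, not_or, not_lt] at hgood
  exact hω (abs_sub_le_mul_add_of_div_le (hupos _) hgood.1 hgood.2)
end
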